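/- For real numbers a₁, a₂ > 0 and b₁, b₂ > 0, ∫_0^∞ ∫_0^∞ e^{−b₁ x − b₂ y} / (a₁ x + a₂ y) dx dy = ∫_0^∞ 1 / ((a₁ x + b₁)(a₂ x + b₂)) dx. -/

import Mathlib

/-!
Writing `1 / (a₁ x + a₂ y) = ∫₀^∞ e^{-(a₁ x + a₂ y) t} dt` turns the integrand into
`∫₀^∞ e^{-(b₁ + a₁ t) x} e^{-(b₂ + a₂ t) y} dt`. By Tonelli the `t`-integral may be taken last,
and the `x`- and `y`-integrals then evaluate to `1 / (b₁ + a₁ t)` and `1 / (b₂ + a₂ t)`.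
Everything is nonnegative, so the computation is done with lower Lebesgue integrals and
transferred to Bochner integrals once the inner integrals are known to be finite.
-/

open MeasureTheory Real Set Function
open scoped ENNReal

theorem lintegral_lintegral_lintegral_mul {α β γ : Type*} [MeasurableSpace α]
    [MeasurableSpace β] [MeasurableSpace γ] {μ : Measure α} {ν : Measure β} {ρ : Measure γ}
    [SFinite μ] [SFinite ν] [SFinite ρ] {f : γ → α → ℝ≥0∞} {g : γ → β → ℝ≥0∞}
    (hf : Measurable (uncurry f)) (hg : Measurable (uncurry g)) :
    ∫⁻ y, ∫⁻ x, ∫⁻ t, f t x * g t y ∂ρ ∂μ ∂ν = ∫⁻ t, (∫⁻ x, f t x ∂μ) * ∫⁻ y, g t y ∂ν ∂ρ := by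
  calc ∫⁻ y, ∫⁻ x, ∫⁻ t, f t x * g t y ∂ρ ∂μ ∂ν
      = ∫⁻ y, ∫⁻ t, ∫⁻ x, f t x * g t y ∂μ ∂ρ ∂ν :=
        lintegral_congr fun y => lintegral_lintegral_swap <| Measurable.aemeasurable <|
          (hf.comp measurable_swap).mul (hg.comp (measurable_snd.prodMk measurable_const))
    _ = ∫⁻ y, ∫⁻ t, (∫⁻ x, f t x ∂μ) * g t y ∂ρ ∂ν :=
        lintegral_congr fun y => lintegral_congr fun t =>
          lintegral_mul_const _ (hf.comp measurable_prodMk_left)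
    _ = ∫⁻ t, ∫⁻ y, (∫⁻ x, f t x ∂μ) * g t y ∂ν ∂ρ :=
        lintegral_lintegral_swap <| Measurable.aemeasurable <|
          (hf.lintegral_prod_right'.comp measurable_snd).mul (hg.comp measurable_swap)
    _ = ∫⁻ t, (∫⁻ x, f t x ∂μ) * ∫⁻ y, g t y ∂ν ∂ρ :=
        lintegral_congr fun t => lintegral_const_mul _ (hg.comp measurable_prodMk_left)

theorem integral_integral_eq_toReal_lintegral_lintegral {α β : Type*} [MeasurableSpace α]
    [MeasurableSpace β] {μ : Measure α} {ν : Measure β} [SFinite μ] {F : α → β → ℝ}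
    (hF : Measurable (uncurry F)) (hF_nonneg : ∀ᵐ y ∂ν, 0 ≤ᵐ[μ] fun x => F x y)
    (hF_fin : ∀ᵐ y ∂ν, ∫⁻ x, ENNReal.ofReal (F x y) ∂μ < ∞) :
    ∫ y, ∫ x, F x y ∂μ ∂ν = (∫⁻ y, ∫⁻ x, ENNReal.ofReal (F x y) ∂μ ∂ν).toReal := by
  have inner : ∀ᵐ y ∂ν, ∫ x, F x y ∂μ = (∫⁻ x, ENNReal.ofReal (F x y) ∂μ).toReal :=
    hF_nonneg.mono fun y hy => integral_eq_lintegral_of_nonneg_ae hy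
      (hF.comp (measurable_id.prodMk measurable_const)).aestronglyMeasurable
  rw [integral_congr_ae inner]
  exact integral_toReal hF.ennreal_ofReal.lintegral_prod_left'.aemeasurable hF_fin

theorem lintegral_exp_neg_mul_Ioi {s : ℝ} (hs : 0 < s) :
    ∫⁻ x in Ioi (0 : ℝ), ENNReal.ofReal (exp (-s * x)) = ENNReal.ofReal s⁻¹ := by
  rw [← ofReal_integral_eq_lintegral_ofReal (exp_neg_integrableOn_Ioi 0 hs)
    (ae_of_all _ fun _ => (exp_pos _).le), integral_exp_mul_Ioi (neg_lt_zero.2 hs)]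
  simp

theorem ofReal_exp_div_eq_lintegral (u : ℝ) {c : ℝ} (hc : 0 < c) :
    ENNReal.ofReal (exp u / c) = ∫⁻ t in Ioi (0 : ℝ), ENNReal.ofReal (exp (u - c * t)) := by
  simp_rw [sub_eq_add_neg, exp_add, ← neg_mul, ENNReal.ofReal_mul (exp_pos _).le,
    lintegral_const_mul' _ _ ENNReal.ofReal_ne_top, lintegral_exp_neg_mul_Ioi hc,
    ← ENNReal.ofReal_mul (exp_pos _).le, div_eq_mul_inv]

theorem lintegral_exp_div_add_lt_top {a₁ a₂ b₁ b₂ y : ℝ} (ha₁ : 0 ≤ a₁) (ha₂ : 0 < a₂)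
    (hb₁ : 0 < b₁) (hb₂ : 0 ≤ b₂) (hy : 0 < y) :
    ∫⁻ x in Ioi (0 : ℝ), ENNReal.ofReal (exp (-b₁ * x - b₂ * y) / (a₁ * x + a₂ * y)) < ∞ := by
  calc ∫⁻ x in Ioi (0 : ℝ), ENNReal.ofReal (exp (-b₁ * x - b₂ * y) / (a₁ * x + a₂ * y))
      ≤ ∫⁻ x in Ioi (0 : ℝ), ENNReal.ofReal (exp (-b₁ * x)) * ENNReal.ofReal (a₂ * y)⁻¹ := by
        refine setLIntegral_mono' measurableSet_Ioi fun x (hx : 0 < x) => ?_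
        rw [← ENNReal.ofReal_mul (exp_pos _).le, ← div_eq_mul_inv]
        refine ENNReal.ofReal_le_ofReal (div_le_div₀ (exp_pos _).le ?_ (by positivity) ?_)
        · exact exp_le_exp.2 (by nlinarith)
        · nlinarith
    _ < ∞ := by
        rw [lintegral_mul_const' _ _ ENNReal.ofReal_ne_top, lintegral_exp_neg_mul_Ioi hb₁]
        exact ENNReal.mul_lt_top ENNReal.ofReal_lt_top ENNReal.ofReal_lt_top

theorem lintegral_lintegral_exp_div_add {a₁ a₂ b₁ b₂ : ℝ} (ha₁ : 0 < a₁) (ha₂ : 0 < a₂)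
    (hb₁ : 0 < b₁) (hb₂ : 0 < b₂) :
    ∫⁻ y in Ioi (0 : ℝ), ∫⁻ x in Ioi (0 : ℝ),
        ENNReal.ofReal (exp (-b₁ * x - b₂ * y) / (a₁ * x + a₂ * y))
      = ∫⁻ t in Ioi (0 : ℝ), ENNReal.ofReal (1 / ((a₁ * t + b₁) * (a₂ * t + b₂))) := by
  have laplace : ∀ y ∈ Ioi (0 : ℝ), ∀ x ∈ Ioi (0 : ℝ),
      ENNReal.ofReal (exp (-b₁ * x - b₂ * y) / (a₁ * x + a₂ * y)) =
        ∫⁻ t in Ioi (0 : ℝ), ENNReal.ofReal (exp (-(b₁ + a₁ * t) * x)) *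
          ENNReal.ofReal (exp (-(b₂ + a₂ * t) * y)) := by
    intro y (hy : 0 < y) x (hx : 0 < x)
    rw [ofReal_exp_div_eq_lintegral _ (by positivity)]
    refine lintegral_congr fun t => ?_
    rw [← ENNReal.ofReal_mul (exp_pos _).le, ← exp_add]
    ring_nf
  calc _ = ∫⁻ y in Ioi (0 : ℝ), ∫⁻ x in Ioi (0 : ℝ), ∫⁻ t in Ioi (0 : ℝ),
          ENNReal.ofReal (exp (-(b₁ + a₁ * t) * x)) *
            ENNReal.ofReal (exp (-(b₂ + a₂ * t) * y)) :=
        setLIntegral_congr_fun measurableSet_Ioi fun y hy =>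
          setLIntegral_congr_fun measurableSet_Ioi (laplace y hy)
    _ = ∫⁻ t in Ioi (0 : ℝ), (∫⁻ x in Ioi (0 : ℝ), ENNReal.ofReal (exp (-(b₁ + a₁ * t) * x))) *
          ∫⁻ y in Ioi (0 : ℝ), ENNReal.ofReal (exp (-(b₂ + a₂ * t) * y)) :=
        lintegral_lintegral_lintegral_mul (by unfold uncurry; fun_prop)
          (by unfold uncurry; fun_prop)
    _ = _ := by
        refine setLIntegral_congr_fun measurableSet_Ioi fun t (ht : 0 < t) => ?_
        rw [lintegral_exp_neg_mul_Ioi (by positivity), lintegral_exp_neg_mul_Ioi (by positivity),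
          ← ENNReal.ofReal_mul (by positivity), ← mul_inv, one_div, add_comm b₁, add_comm b₂]

theorem quadrant_to_single (a₁ a₂ b₁ b₂ : ℝ)
    (ha₁ : 0 < a₁) (ha₂ : 0 < a₂) (hb₁ : 0 < b₁) (hb₂ : 0 < b₂) :
    (∫ y in Set.Ioi (0:ℝ), ∫ x in Set.Ioi (0:ℝ),
        Real.exp (-b₁ * x - b₂ * y) / (a₁ * x + a₂ * y))
      = ∫ x in Set.Ioi (0:ℝ), 1 / ((a₁ * x + b₁) * (a₂ * x + b₂)) := by
  have hpos : ∀ᵐ x ∂volume.restrict (Ioi (0 : ℝ)), 0 < x := ae_restrict_mem measurableSet_Ioi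
  rw [integral_integral_eq_toReal_lintegral_lintegral (by unfold uncurry; fun_prop)
      (hpos.mono fun y hy => hpos.mono fun x hx => by positivity)
      (hpos.mono fun y hy => lintegral_exp_div_add_lt_top ha₁.le ha₂ hb₁ hb₂.le hy),
    lintegral_lintegral_exp_div_add ha₁ ha₂ hb₁ hb₂,
    integral_eq_lintegral_of_nonneg_ae (hpos.mono fun x hx => by positivity)
      (Measurable.aestronglyMeasurable (by fun_prop))]
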